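/- arXiv:2204.12871 — 3 statements merged into one kernel-verified Lean document; each statement's English description precedes it below -/
import Mathlib

section
/- For every k ≥ n and all increasing sequences of integers (s_{1,m})_{m=0}^k,…,(s_{n,m})_{m=0}^k there exists a bounded set E ⊂ ℝⁿ of positive Lebesgue measure with the following property: if B is a rare basis in ℝⁿ and Ω is the set of all n-tuples (m₁,…,mₙ) ∈ Ω_{n,k} for which there exists an interval R₁×⋯×Rₙ ∈ B with dyadic side lengths such that |R_j| ∈ (2^{s_{j,m_j−1}}, 2^{s_{j,m_j}}] for every j = 1,…,n, then |{x ∈ ℝⁿ : M_B(χ_E)(x) ≥ 1/2^k}| ≥ cₙ · card(Ω) · 2^k · |E|, where cₙ > 0 depends only on n. -/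
/-!
Write reals in binary, with digits at all positions `q ∈ ℤ`. In direction `j` let
`F_j ⊂ [0, 2^{s_{j,k}})` be the set where the digits at `s_{j,0}, …, s_{j,k-1}` vanish, and take
`E = ∏ F_j`, so `|E| = 2^{-nk} ∏ 2^{s_{j,k}}`. For `m ∈ Ω_{n,k}` let `G_m = ∏ A_{j,m_j}`, where
`A_{j,i}` asks for the digit `1` at `s_{j,i-1}` and the digits `0` at `s_{j,i}, …, s_{j,k-1}`.
Two tuples with the same sum differ upwards in some coordinate, so the `G_m` are pairwise
disjoint, and `|G_m| = 2^{k-n} |E|`.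

If a box of `B` has sides `2^{t_j}` with `s_{j,m_j-1} < t_j ≤ s_{j,m_j}`, translate it onto the
aligned dyadic box containing a point `x ∈ G_m`. There the digits at positions `≥ t_j` are those
of `x`, so only the `m_j` lower digits are constrained and `E` fills a fraction
`2^{-∑ m_j} = 2^{-k}` of the box. Hence `G_m ⊆ {M_B χ_E ≥ 2^{-k}}` for every `m ∈ Ω`, which gives
the bound with `cₙ = 2^{-n}`. Measures of digit sets are computed by halving: translation by
`2^a` exchanges the digits `0` and `1` at position `a` and keeps the lower digits.
-/

open MeasureTheory Set
open scoped ENNReal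

noncomputable section

/-- An axis-parallel interval (box) in `ℝⁿ`, given by its left and right endpoints. -/
structure BoxInterval (n : ℕ) where
  a : Fin n → ℝ
  b : Fin n → ℝ
  hab : ∀ j, a j < b j

namespace BoxInterval

/-- The underlying set of a box. -/
def toSet {n : ℕ} (R : BoxInterval n) : Set (Fin n → ℝ) :=
  Set.univ.pi fun j => Set.Icc (R.a j) (R.b j)

/-- The side length of a box in direction `j`. -/
def side {n : ℕ} (R : BoxInterval n) (j : Fin n) : ℝ := R.b j - R.a j

/-- Translation of a box by a vector `v`. -/
def translate {n : ℕ} (R : BoxInterval n) (v : Fin n → ℝ) : BoxInterval n where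
  a := fun j => R.a j + v j
  b := fun j => R.b j + v j
  hab := fun j => by have := R.hab j; linarith

end BoxInterval

/-- A rare basis in `ℝⁿ`: a nonempty translation-invariant collection of intervals. -/
def IsRareBasis {n : ℕ} (B : Set (BoxInterval n)) : Prop :=
  B.Nonempty ∧ ∀ R ∈ B, ∀ v : Fin n → ℝ, R.translate v ∈ B

/-- The geometric maximal operator `M_B` associated with a collection `B` of boxes:
`M_B f (x) = sup { (1/|R|) ∫_R |f| : x ∈ R ∈ B }`. -/
def maxOp {n : ℕ} (B : Set (BoxInterval n)) (f : (Fin n → ℝ) → ℝ)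
    (x : Fin n → ℝ) : ℝ≥0∞ :=
  ⨆ (R : BoxInterval n) (_ : R ∈ B) (_ : x ∈ R.toSet),
    (∫⁻ y in R.toSet, ENNReal.ofReal |f y| ∂volume) / volume R.toSet

/-- The spectrum `W_B ⊂ ℤⁿ` of a collection of boxes: all tuples
`(⌈log₂ |R₁|⌉, …, ⌈log₂ |Rₙ|⌉)` over boxes `R₁ × ⋯ × Rₙ ∈ B`. -/
def spectrumB {n : ℕ} (B : Set (BoxInterval n)) : Set (Fin n → ℤ) :=
  {w | ∃ R ∈ B, ∀ j, w j = ⌈Real.logb 2 (R.side j)⌉}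

/-- The slice `W_t` of `W ⊂ ℤ^{k+1}` over `t ∈ ℤᵏ`. -/
def sliceZ {k : ℕ} (W : Set (Fin (k + 1) → ℤ)) (t : Fin k → ℤ) : Set ℤ :=
  {τ | Fin.snoc t τ ∈ W}

/-- `W` is a net for `S` in `ℤ^{k+1}`: every slice of `W` is a one-dimensional
net for the corresponding slice of `S`. -/
def IsNetMulti {k : ℕ} (W S : Set (Fin (k + 1) → ℤ)) : Prop :=
  ∀ t : Fin k → ℤ, ∃ N : ℕ, ∀ τ ∈ sliceZ S t, ∃ w ∈ sliceZ W t, |τ - w| ≤ (N : ℤ)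

/-- Projection of `W ⊂ ℤⁿ` onto the first `k` coordinates. -/
def projZ {n : ℕ} (k : ℕ) (hk : k ≤ n) (W : Set (Fin n → ℤ)) : Set (Fin k → ℤ) :=
  (fun w (i : Fin k) => w (Fin.castLE hk i)) '' W

/-- `W ⊂ ℤⁿ` is dense in `S₁ × ⋯ × Sₙ`: for each `k`, `π_{k+1}(W)` is a net for
`π_k(W) × S_{k+1}`. -/
def IsDenseIn {n : ℕ} (W : Set (Fin n → ℤ)) (S : Fin n → Set ℤ) : Prop :=
  ∀ k : Fin n,
    IsNetMulti (projZ (k.val + 1) k.isLt W)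
      {v : Fin (k.val + 1) → ℤ |
        Fin.init v ∈ projZ k.val (Nat.le_of_lt k.isLt) W ∧ v (Fin.last k.val) ∈ S k}

/-- `Ω_{n,k}`: the set of `n`-tuples of positive integers summing to `k`. -/
def OmegaNK (n k : ℕ) : Set (Fin n → ℕ) :=
  {m | (∀ j, 1 ≤ m j) ∧ ∑ j, m j = k}

/-- The smallest box concentric with `R`, containing `R`, with dyadic side lengths. -/
def dyadicHull {n : ℕ} (R : BoxInterval n) : BoxInterval n where
  a := fun j => (R.a j + R.b j) / 2 - (2:ℝ) ^ ⌈Real.logb 2 (R.side j)⌉ / 2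
  b := fun j => (R.a j + R.b j) / 2 + (2:ℝ) ^ ⌈Real.logb 2 (R.side j)⌉ / 2
  hab := fun j => by
    have h : (0:ℝ) < (2:ℝ) ^ ⌈Real.logb 2 (R.side j)⌉ := by positivity
    linarith

/-- The dyadic skeleton `B_d` of a collection `B`. -/
def dyadicSkeleton {n : ℕ} (B : Set (BoxInterval n)) : Set (BoxInterval n) :=
  {Rd | ∃ R ∈ B, Rd = dyadicHull R}

/-- `B` is `Ω`-complete (for `Ω ⊆ Ω_{n,k}`). -/
def OmegaComplete {n : ℕ} (B : Set (BoxInterval n)) (k : ℕ) (Ω : Set (Fin n → ℕ)) : Prop :=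
  ∃ s : Fin n → ℕ → ℤ,
    (∀ j, ∀ m, m < k → s j m < s j (m + 1)) ∧
    ∀ m ∈ Ω, ∃ R ∈ dyadicSkeleton B, ∀ j,
      R.side j ∈ Set.Ioc ((2:ℝ) ^ s j (m j - 1)) ((2:ℝ) ^ s j (m j))

/-- Product of an `n`-dimensional box and a one-dimensional box. -/
def prodBox {n : ℕ} (J1 : BoxInterval n) (J2 : BoxInterval 1) : BoxInterval (n + 1) where
  a := Fin.snoc J1.a (J2.a 0)
  b := Fin.snoc J1.b (J2.b 0)
  hab := fun j => by
    induction j using Fin.lastCases with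
    | last => simpa using J2.hab 0
    | cast i => simpa using J1.hab i

/-- The product basis `B₁ × B₂`. -/
def prodBasis {n : ℕ} (B1 : Set (BoxInterval n)) (B2 : Set (BoxInterval 1)) :
    Set (BoxInterval (n + 1)) :=
  {R | ∃ J1 ∈ B1, ∃ J2 ∈ B2, R = prodBox J1 J2}

/-- The (is)-property of a rare basis in `ℝ²`. -/
def ISProperty (B : Set (BoxInterval 2)) : Prop :=
  ∀ k : ℕ, ∃ R : Fin (k + 1) → BoxInterval 2,
    (∀ i, R i ∈ B) ∧
    (∀ i, (R i).a = fun _ => 0) ∧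
    (∀ i, ∃ pq : Fin 2 → ℤ, ∀ l, (R i).b l = (2:ℝ) ^ pq l) ∧
    (∀ i j, i ≠ j → ∀ v : Fin 2 → ℝ, ¬ ((R i).translate v).toSet ⊆ (R j).toSet) ∧
    (∀ i j, ∃ Q ∈ B, Q.toSet = (R i).toSet ∩ (R j).toSet)

open scoped Pointwise

def dyadicDigit (q : ℤ) (x : ℝ) : ℤ := ⌊x / 2 ^ q⌋ % 2

lemma measurable_dyadicDigit (q : ℤ) : Measurable (dyadicDigit q) :=
  (measurable_from_top (f := fun z : ℤ => z % 2)).comp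
    (Int.measurable_floor.comp (measurable_id.div_const _))

lemma two_zpow_eq_two_zpow_mul_natCast {t q : ℤ} (h : t ≤ q) :
    (2 : ℝ) ^ q = 2 ^ t * ((2 ^ (q - t).toNat : ℕ) : ℝ) := by
  rw [Nat.cast_pow, Nat.cast_ofNat, ← zpow_natCast, Int.toNat_of_nonneg (by omega),
    ← zpow_add₀ two_ne_zero, add_sub_cancel]

lemma floor_div_two_zpow_of_le {t q : ℤ} (h : t ≤ q) (x : ℝ) :
    ⌊x / 2 ^ q⌋ = ⌊x / 2 ^ t⌋ / ((2 ^ (q - t).toNat : ℕ) : ℤ) := by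
  rw [two_zpow_eq_two_zpow_mul_natCast h, ← div_div, Int.floor_div_natCast]

lemma mem_Ico_two_zpow_iff {t T : ℤ} (h : t ≤ T) (x : ℝ) :
    x ∈ Ico 0 ((2 : ℝ) ^ T) ↔ 0 ≤ ⌊x / 2 ^ t⌋ ∧ ⌊x / 2 ^ t⌋ < ((2 ^ (T - t).toNat : ℕ) : ℤ) := by
  have h2t : (0 : ℝ) < 2 ^ t := zpow_pos two_pos t
  rw [Int.floor_nonneg, Int.floor_lt, le_div_iff₀ h2t, zero_mul, Int.cast_natCast,
    div_lt_iff₀ h2t, mul_comm, ← two_zpow_eq_two_zpow_mul_natCast h]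
  rfl

lemma floor_add_two_zpow_div (a : ℤ) (x : ℝ) : ⌊(x + 2 ^ a) / 2 ^ a⌋ = ⌊x / 2 ^ a⌋ + 1 := by
  rw [add_div, div_self (zpow_ne_zero a two_ne_zero), Int.floor_add_one]

lemma dyadicDigit_eq_of_floor_eq {t q : ℤ} (h : t ≤ q) {x y : ℝ}
    (hxy : ⌊x / 2 ^ t⌋ = ⌊y / 2 ^ t⌋) : dyadicDigit q x = dyadicDigit q y := by
  simp only [dyadicDigit, floor_div_two_zpow_of_le h, hxy]

lemma natCast_two_pow_toNat_emod_two {d : ℤ} (hd : 0 < d) : ((2 ^ d.toNat : ℕ) : ℤ) % 2 = 0 := by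
  rw [Nat.cast_pow, Nat.cast_ofNat, ← Int.dvd_iff_emod_eq_zero]
  exact dvd_pow_self 2 (by omega)

lemma dyadicDigit_add_int_mul {p q : ℤ} (h : p < q) (x : ℝ) (u : ℤ) :
    dyadicDigit p (x + u * 2 ^ q) = dyadicDigit p x := by
  have hN := natCast_two_pow_toNat_emod_two (sub_pos.2 h)
  have hsplit : (x + u * 2 ^ q) / 2 ^ p = x / 2 ^ p + ((u * (2 ^ (q - p).toNat : ℕ) : ℤ) : ℝ) := by
    rw [two_zpow_eq_two_zpow_mul_natCast h.le]
    push_cast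
    field_simp
  rw [dyadicDigit, dyadicDigit, hsplit, Int.floor_add_intCast, Int.add_emod, Int.mul_emod, hN]
  simp

def dyadicDigitSet (T : ℤ) (Q : Finset ℤ) (ε : ℤ → ℤ) : Set ℝ :=
  {x | x ∈ Ico 0 ((2 : ℝ) ^ T) ∧ ∀ q ∈ Q, dyadicDigit q x = ε q}

lemma measurableSet_dyadicDigitSet (T : ℤ) (Q : Finset ℤ) (ε : ℤ → ℤ) :
    MeasurableSet (dyadicDigitSet T Q ε) := by
  have h : dyadicDigitSet T Q ε = Ico 0 ((2 : ℝ) ^ T) ∩ ⋂ q ∈ Q, dyadicDigit q ⁻¹' {ε q} := by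
    ext x; simp [dyadicDigitSet]
  rw [h]
  exact measurableSet_Ico.inter (Q.measurableSet_biInter fun q _ =>
    measurable_dyadicDigit q (measurableSet_singleton _))

lemma dyadicDigitSet_subset_Ico (T : ℤ) (Q : Finset ℤ) (ε : ℤ → ℤ) :
    dyadicDigitSet T Q ε ⊆ Ico 0 ((2 : ℝ) ^ T) := fun _ hx => hx.1

lemma dyadicDigitSet_insert (T a : ℤ) (Q : Finset ℤ) (ε : ℤ → ℤ) :
    dyadicDigitSet T (insert a Q) ε = dyadicDigitSet T Q ε ∩ {x | dyadicDigit a x = ε a} := by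
  ext x
  simp only [dyadicDigitSet, Finset.forall_mem_insert, mem_inter_iff, mem_ofPred_eq]
  tauto

/-- The bound `2^T` is not crossed because `2^(T-a)` is even. -/
lemma two_zpow_vadd_dyadicDigitSet_inter {T a : ℤ} {Q : Finset ℤ} (ε : ℤ → ℤ) (haT : a < T)
    (hQ : ∀ q ∈ Q, q < a) :
    ((2 : ℝ) ^ a) +ᵥ (dyadicDigitSet T Q ε ∩ {x | dyadicDigit a x = 0}) =
      dyadicDigitSet T Q ε ∩ {x | dyadicDigit a x = 1} := by
  have hM := natCast_two_pow_toNat_emod_two (sub_pos.2 haT)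
  ext y
  obtain ⟨x, rfl⟩ : ∃ x, y = x + 2 ^ a := ⟨y - 2 ^ a, by ring⟩
  have hx : -(2 : ℝ) ^ a + (x + 2 ^ a) = x := by ring
  have hdig : dyadicDigit a (x + 2 ^ a) = (⌊x / 2 ^ a⌋ + 1) % 2 := by
    rw [dyadicDigit, floor_add_two_zpow_div]
  have hlow : ∀ q ∈ Q, dyadicDigit q (x + 2 ^ a) = dyadicDigit q x := fun q hq => by
    simpa using dyadicDigit_add_int_mul (hQ q hq) x 1
  simp only [mem_vadd_set_iff_neg_vadd_mem, vadd_eq_add, hx, dyadicDigitSet, mem_inter_iff,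
    mem_ofPred_eq, mem_Ico_two_zpow_iff haT.le, floor_add_two_zpow_div, hdig]
  unfold dyadicDigit
  constructor
  · rintro ⟨⟨⟨h0, h1⟩, hQx⟩, h2⟩
    refine ⟨⟨⟨by omega, by omega⟩, fun q hq => ?_⟩, by omega⟩
    rw [← hQx q hq]; exact hlow q hq
  · rintro ⟨⟨⟨h0, h1⟩, hQx⟩, h2⟩
    refine ⟨⟨⟨by omega, by omega⟩, fun q hq => ?_⟩, by omega⟩
    rw [← hQx q hq]; exact (hlow q hq).symm

lemma volume_dyadicDigitSet_inter {T a : ℤ} {Q : Finset ℤ} (ε : ℤ → ℤ) (haT : a < T)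
    (hQ : ∀ q ∈ Q, q < a) {e : ℤ} (he : e = 0 ∨ e = 1) :
    volume (dyadicDigitSet T Q ε ∩ {x | dyadicDigit a x = e}) =
      2⁻¹ * volume (dyadicDigitSet T Q ε) := by
  set S := dyadicDigitSet T Q ε
  have hmeas : MeasurableSet (S ∩ {x | dyadicDigit a x = 1}) :=
    (measurableSet_dyadicDigitSet T Q ε).inter
      (measurable_dyadicDigit a (measurableSet_singleton 1))
  have hsplit : S = (S ∩ {x | dyadicDigit a x = 0}) ∪ (S ∩ {x | dyadicDigit a x = 1}) := by
    rw [← inter_union_distrib_left, eq_comm, inter_eq_left]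
    exact fun x _ => Int.emod_two_eq _
  have hdisj : Disjoint (S ∩ {x | dyadicDigit a x = 0}) (S ∩ {x | dyadicDigit a x = 1}) :=
    disjoint_left.2 fun x h0 h1 => zero_ne_one (h0.2.symm.trans h1.2)
  have htranslate : volume (S ∩ {x | dyadicDigit a x = 1}) =
      volume (S ∩ {x | dyadicDigit a x = 0}) := by
    rw [← two_zpow_vadd_dyadicDigitSet_inter ε haT hQ, measure_vadd]
  have hS : volume S = 2 * volume (S ∩ {x | dyadicDigit a x = e}) := by
    rw [two_mul]
    conv_lhs => rw [hsplit, measure_union hdisj hmeas]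
    rcases he with rfl | rfl <;> rw [htranslate]
  rw [hS, ENNReal.inv_mul_cancel_left two_ne_zero ENNReal.ofNat_ne_top]

lemma volume_dyadicDigitSet {T : ℤ} {Q : Finset ℤ} {ε : ℤ → ℤ} (hQ : ∀ q ∈ Q, q < T)
    (hε : ∀ q ∈ Q, ε q = 0 ∨ ε q = 1) :
    volume (dyadicDigitSet T Q ε) = 2⁻¹ ^ Q.card * ENNReal.ofReal (2 ^ T) := by
  induction Q using Finset.induction_on_max with
  | empty =>
    have : dyadicDigitSet T ∅ ε = Ico 0 (2 ^ T) := by ext x; simp [dyadicDigitSet]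
    simp [this, Real.volume_Ico]
  | insert a Q hlt ih =>
    rw [dyadicDigitSet_insert, volume_dyadicDigitSet_inter ε (hQ a (Finset.mem_insert_self a Q))
      hlt (hε a (Finset.mem_insert_self a Q)),
      ih (fun q hq => hQ q (Finset.mem_insert_of_mem hq))
        (fun q hq => hε q (Finset.mem_insert_of_mem hq)),
      Finset.card_insert_of_notMem fun h => (hlt a h).false, pow_succ', mul_assoc]

lemma floor_div_two_zpow_mul_add {t : ℤ} {z : ℝ} (hz : z ∈ Ico 0 ((2 : ℝ) ^ t)) (N : ℤ) :
    ⌊(N * 2 ^ t + z) / 2 ^ t⌋ = N := by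
  have hz0 := (mem_Ico_two_zpow_iff le_rfl z).1 hz
  simp only [sub_self, Int.toNat_zero, pow_zero, Nat.cast_one] at hz0
  rw [add_div, mul_div_cancel_right₀ _ (zpow_ne_zero t two_ne_zero), Int.floor_intCast_add]
  omega

def dyadicCantorSet (P : ℕ → ℤ) (k : ℕ) : Set ℝ :=
  dyadicDigitSet (P k) ((Finset.range k).image P) 0

def dyadicCantorLayer (P : ℕ → ℤ) (k i : ℕ) : Set ℝ :=
  dyadicDigitSet (P k) ((Finset.Ico (i - 1) k).image P) fun q => if q = P (i - 1) then 1 else 0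

lemma measurableSet_dyadicCantorSet (P : ℕ → ℤ) (k : ℕ) : MeasurableSet (dyadicCantorSet P k) :=
  measurableSet_dyadicDigitSet _ _ _

lemma measurableSet_dyadicCantorLayer (P : ℕ → ℤ) (k i : ℕ) :
    MeasurableSet (dyadicCantorLayer P k i) :=
  measurableSet_dyadicDigitSet _ _ _

lemma dyadicCantorSet_subset_Ico (P : ℕ → ℤ) (k : ℕ) :
    dyadicCantorSet P k ⊆ Ico 0 ((2 : ℝ) ^ P k) :=
  dyadicDigitSet_subset_Ico _ _ _

section DyadicCantorSet

variable {P : ℕ → ℤ} {k : ℕ} (hP : StrictMonoOn P (Iic k))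
include hP

lemma card_image_of_strictMonoOn {s : Finset ℕ} (hs : ∀ r ∈ s, r ≤ k) :
    (s.image P).card = s.card :=
  Finset.card_image_of_injOn (hP.injOn.mono fun r hr => hs r hr)

lemma volume_dyadicCantorSet :
    volume (dyadicCantorSet P k) = 2⁻¹ ^ k * ENNReal.ofReal (2 ^ P k) := by
  rw [dyadicCantorSet, volume_dyadicDigitSet, card_image_of_strictMonoOn hP, Finset.card_range]
  · simpa using fun r hr => hr.le
  · exact Finset.forall_mem_image.2 fun r hr =>
      hP (mem_Iic.2 (Finset.mem_range.1 hr).le) self_mem_Iic (Finset.mem_range.1 hr)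
  · simp

lemma volume_dyadicCantorLayer {i : ℕ} (hi : 1 ≤ i) :
    volume (dyadicCantorLayer P k i) = 2⁻¹ ^ (k + 1 - i) * ENNReal.ofReal (2 ^ P k) := by
  rw [dyadicCantorLayer, volume_dyadicDigitSet, card_image_of_strictMonoOn hP, Nat.card_Ico]
  · congr 2; omega
  · simpa using fun r _ hr => hr.le
  · exact Finset.forall_mem_image.2 fun r hr =>
      hP (mem_Iic.2 (Finset.mem_Ico.1 hr).2.le) self_mem_Iic (Finset.mem_Ico.1 hr).2
  · intro q _
    split_ifs <;> simp

lemma disjoint_dyadicCantorLayer {i i' : ℕ} (hi : 1 ≤ i) (hii' : i < i') (hi'k : i' ≤ k) :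
    Disjoint (dyadicCantorLayer P k i) (dyadicCantorLayer P k i') := by
  refine disjoint_left.2 fun x hx hx' => ?_
  have hne : P (i' - 1) ≠ P (i - 1) :=
    hP.injOn.ne (mem_Iic.2 (by omega)) (mem_Iic.2 (by omega)) (by omega)
  have h0 := hx.2 (P (i' - 1)) (Finset.mem_image_of_mem P (Finset.mem_Ico.2 ⟨by omega, by omega⟩))
  have h1 := hx'.2 (P (i' - 1)) (Finset.mem_image_of_mem P (Finset.mem_Ico.2 ⟨le_rfl, by omega⟩))
  simp only [if_neg hne] at h0
  simp only [if_pos] at h1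
  exact zero_ne_one (h0.symm.trans h1)

/-- On the aligned interval of length `2^t` around `x`, the digits at `P i, …, P (k-1)` are those
of `x`, hence `0`, while the `i` digits at `P 0, …, P (i-1)` lie below `t` and are free. -/
lemma exists_Icc_le_volume_dyadicCantorSet_inter {i : ℕ} {t : ℤ} {x : ℝ}
    (hx : x ∈ dyadicCantorLayer P k i) (hi : 1 ≤ i) (hik : i ≤ k) (hti : P (i - 1) < t)
    (hti' : t ≤ P i) :
    ∃ c : ℝ, x ∈ Icc c (c + 2 ^ t) ∧
      2⁻¹ ^ i * ENNReal.ofReal (2 ^ t) ≤ volume (dyadicCantorSet P k ∩ Icc c (c + 2 ^ t)) := by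
  have hPlt : ∀ r < i, P r < t := fun r hr =>
    (hP.monotoneOn (mem_Iic.2 (by omega)) (mem_Iic.2 (by omega)) (by omega)).trans_lt hti
  have hPge : ∀ r, i ≤ r → r ≤ k → t ≤ P r := fun r hr hrk =>
    hti'.trans (hP.monotoneOn (mem_Iic.2 hik) (mem_Iic.2 hrk) hr)
  have htk : t ≤ P k := hPge k hik le_rfl
  set N := ⌊x / 2 ^ t⌋
  set K := dyadicDigitSet t ((Finset.range i).image P) 0
  have h2t : (0 : ℝ) < 2 ^ t := zpow_pos two_pos t
  refine ⟨N * 2 ^ t, ⟨?_, ?_⟩, ?_⟩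
  · exact (le_div_iff₀ h2t).1 (Int.floor_le _)
  · have := Int.lt_floor_add_one (x / 2 ^ t)
    rw [div_lt_iff₀ h2t] at this
    linarith
  have hK : volume K = 2⁻¹ ^ i * ENNReal.ofReal (2 ^ t) := by
    rw [volume_dyadicDigitSet, card_image_of_strictMonoOn hP, Finset.card_range]
    · simpa using fun r hr => (hr.trans_le hik).le
    · exact Finset.forall_mem_image.2 fun r hr => hPlt r (Finset.mem_range.1 hr)
    · simp
  rw [← hK, ← measure_vadd volume ((N : ℝ) * 2 ^ t) K]
  refine measure_mono ?_
  simp only [subset_def, mem_vadd_set, vadd_eq_add, forall_exists_index, and_imp]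
  rintro _ z hz rfl
  have hzI : z ∈ Ico 0 ((2 : ℝ) ^ t) := hz.1
  have hfloor : ⌊((N : ℝ) * 2 ^ t + z) / 2 ^ t⌋ = N := floor_div_two_zpow_mul_add hzI N
  refine ⟨⟨?_, ?_⟩, ?_, ?_⟩
  · rw [mem_Ico_two_zpow_iff htk, hfloor, ← mem_Ico_two_zpow_iff htk]
    exact hx.1
  · simp only [Finset.mem_image, Finset.mem_range, forall_exists_index, and_imp]
    rintro _ r hr rfl
    rcases lt_or_ge r i with hri | hri
    · rw [add_comm, dyadicDigit_add_int_mul (hPlt r hri)]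
      exact hz.2 (P r) (Finset.mem_image_of_mem P (Finset.mem_range.2 hri))
    · have hne : P r ≠ P (i - 1) :=
        hP.injOn.ne (mem_Iic.2 hr.le) (mem_Iic.2 (by omega)) (by omega)
      rw [dyadicDigit_eq_of_floor_eq (hPge r hri hr.le) hfloor,
        hx.2 (P r) (Finset.mem_image_of_mem P (Finset.mem_Ico.2 ⟨by omega, hr⟩))]
      simp [hne]
  · simpa using hzI.1
  · simpa using hzI.2.le

end DyadicCantorSet

namespace BoxInterval

variable {n : ℕ}

lemma volume_toSet (R : BoxInterval n) : volume R.toSet = ∏ j, ENNReal.ofReal (R.side j) := by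
  simp only [toSet, side, volume_pi_pi, Real.volume_Icc]

lemma volume_toSet_ne_zero (R : BoxInterval n) : volume R.toSet ≠ 0 := by
  rw [volume_toSet]
  exact Finset.prod_ne_zero_iff.2 fun j _ => (ENNReal.ofReal_pos.2 (sub_pos.2 (R.hab j))).ne'

lemma volume_toSet_ne_top (R : BoxInterval n) : volume R.toSet ≠ ⊤ :=
  (isCompact_univ_pi fun _ => isCompact_Icc).measure_lt_top.ne

lemma toSet_translate_sub (R : BoxInterval n) (c : Fin n → ℝ) :
    (R.translate (c - R.a)).toSet = univ.pi fun j => Icc (c j) (c j + R.side j) := by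
  simp only [toSet, translate, side, Pi.sub_apply]
  congr! 2 with j
  congr 1 <;> ring

end BoxInterval

lemma le_maxOp_indicator {n : ℕ} {B : Set (BoxInterval n)} {R : BoxInterval n} (hR : R ∈ B)
    {x : Fin n → ℝ} (hx : x ∈ R.toSet) {E : Set (Fin n → ℝ)} (hE : MeasurableSet E) :
    volume (E ∩ R.toSet) / volume R.toSet ≤ maxOp B (E.indicator fun _ => (1 : ℝ)) x := by
  have hnum : ∫⁻ y in R.toSet, ENNReal.ofReal |E.indicator (fun _ => (1 : ℝ)) y| =
      volume (E ∩ R.toSet) := by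
    have : (fun y => ENNReal.ofReal |E.indicator (fun _ => (1 : ℝ)) y|) = E.indicator 1 := by
      ext y; by_cases hy : y ∈ E <;> simp [hy]
    rw [this, lintegral_indicator_one hE, Measure.restrict_apply hE]
  rw [← hnum]
  exact le_iSup₂_of_le R hR (le_iSup_of_le hx le_rfl)

lemma OmegaNK.le_of_mem {n k : ℕ} {m : Fin n → ℕ} (hm : m ∈ OmegaNK n k) (j : Fin n) : m j ≤ k :=
  hm.2 ▸ Finset.single_le_sum (fun i _ => Nat.zero_le (m i)) (Finset.mem_univ j)

lemma OmegaNK.finite (n k : ℕ) : (OmegaNK n k).Finite :=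
  (Set.Finite.pi' fun _ => finite_Iic k).subset fun _ hm j => OmegaNK.le_of_mem hm j

lemma OmegaNK.exists_lt_of_ne {n k : ℕ} {m m' : Fin n → ℕ} (hm : m ∈ OmegaNK n k)
    (hm' : m' ∈ OmegaNK n k) (hne : m ≠ m') : ∃ j, m j < m' j := by
  by_contra! h
  have := (Finset.sum_eq_sum_iff_of_le fun j _ => h j).1 (hm'.2.trans hm.2.symm)
  exact hne (funext fun j => (this j (Finset.mem_univ j)).symm)

section DyadicCantorProduct

variable {n : ℕ} (s : Fin n → ℕ → ℤ)

def dyadicCantorProduct (k : ℕ) : Set (Fin n → ℝ) := univ.pi fun j => dyadicCantorSet (s j) k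

def dyadicCantorRegion (k : ℕ) (m : Fin n → ℕ) : Set (Fin n → ℝ) :=
  univ.pi fun j => dyadicCantorLayer (s j) k (m j)

variable {k : ℕ}

lemma isBounded_dyadicCantorProduct : Bornology.IsBounded (dyadicCantorProduct s k) :=
  Bornology.IsBounded.pi fun j =>
    (Metric.isBounded_Ico _ _).subset (dyadicCantorSet_subset_Ico (s j) k)

lemma measurableSet_dyadicCantorProduct : MeasurableSet (dyadicCantorProduct s k) :=
  MeasurableSet.univ_pi fun j => measurableSet_dyadicCantorSet (s j) k

lemma measurableSet_dyadicCantorRegion (m : Fin n → ℕ) :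
    MeasurableSet (dyadicCantorRegion s k m) :=
  MeasurableSet.univ_pi fun j => measurableSet_dyadicCantorLayer (s j) k (m j)

variable {s} (hs : ∀ j, StrictMonoOn (s j) (Iic k))
include hs

lemma volume_dyadicCantorProduct :
    volume (dyadicCantorProduct s k) = ∏ j, 2⁻¹ ^ k * ENNReal.ofReal (2 ^ s j k) := by
  simp only [dyadicCantorProduct, volume_pi_pi, volume_dyadicCantorSet (hs _)]

lemma volume_dyadicCantorProduct_pos : 0 < volume (dyadicCantorProduct s k) := by
  rw [volume_dyadicCantorProduct hs]
  exact CanonicallyOrderedAdd.prod_pos.2 fun j _ =>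
    ENNReal.mul_pos (by simp) (ENNReal.ofReal_pos.2 (zpow_pos two_pos _)).ne'

lemma volume_dyadicCantorRegion {m : Fin n → ℕ} (hm : m ∈ OmegaNK n k) :
    volume (dyadicCantorRegion s k m) = 2⁻¹ ^ n * (2 ^ k * volume (dyadicCantorProduct s k)) := by
  have hcoord : ∀ j, (2⁻¹ : ℝ≥0∞) ^ (k + 1 - m j) = 2⁻¹ * (2 ^ m j * 2⁻¹ ^ k) := fun j => by
    obtain ⟨d, hd⟩ := Nat.exists_eq_add_of_le (OmegaNK.le_of_mem hm j)
    rw [hd, show m j + d + 1 - m j = d + 1 by omega, pow_add _ (m j) d, ← mul_assoc (2 ^ m j),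
      ← mul_pow, ENNReal.mul_inv_cancel two_ne_zero ENNReal.ofNat_ne_top, one_pow, one_mul,
      pow_succ']
  simp only [dyadicCantorRegion, volume_pi_pi, volume_dyadicCantorLayer (hs _) (hm.1 _),
    volume_dyadicCantorProduct hs, hcoord, mul_assoc, Finset.prod_mul_distrib, Finset.prod_const,
    Finset.card_univ, Fintype.card_fin, Finset.prod_pow_eq_pow_sum, hm.2]

lemma pairwiseDisjoint_dyadicCantorRegion :
    (OmegaNK n k).PairwiseDisjoint (dyadicCantorRegion s k) := by
  intro m hm m' hm' hne
  obtain ⟨j, hj⟩ := OmegaNK.exists_lt_of_ne hm hm' hne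
  exact disjoint_univ_pi.2
    ⟨j, disjoint_dyadicCantorLayer (hs j) (hm.1 j) hj (OmegaNK.le_of_mem hm' j)⟩

lemma exists_mem_basis_le_volume_dyadicCantorProduct_inter {B : Set (BoxInterval n)}
    (hB : IsRareBasis B) {m : Fin n → ℕ} (hm : m ∈ OmegaNK n k) {R : BoxInterval n} (hR : R ∈ B)
    {t : Fin n → ℤ} (ht : ∀ j, R.side j = 2 ^ t j) (hlo : ∀ j, s j (m j - 1) < t j)
    (hhi : ∀ j, t j ≤ s j (m j)) {x : Fin n → ℝ} (hx : x ∈ dyadicCantorRegion s k m) :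
    ∃ R' ∈ B, x ∈ R'.toSet ∧
      2⁻¹ ^ k * volume R'.toSet ≤ volume (dyadicCantorProduct s k ∩ R'.toSet) := by
  choose c hc using fun j => exists_Icc_le_volume_dyadicCantorSet_inter (hs j) (hx j (mem_univ j))
    (hm.1 j) (OmegaNK.le_of_mem hm j) (hlo j) (hhi j)
  have hset : (R.translate (c - R.a)).toSet = univ.pi fun j => Icc (c j) (c j + 2 ^ t j) := by
    simp only [R.toSet_translate_sub, ht]
  refine ⟨R.translate (c - R.a), hB.2 R hR _, hset ▸ fun j _ => (hc j).1, ?_⟩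
  rw [hset, dyadicCantorProduct, ← pi_inter_distrib, volume_pi_pi, volume_pi_pi]
  calc 2⁻¹ ^ k * ∏ j, volume (Icc (c j) (c j + 2 ^ t j))
      = ∏ j, 2⁻¹ ^ m j * ENNReal.ofReal (2 ^ t j) := by
        simp only [Real.volume_Icc, add_sub_cancel_left, Finset.prod_mul_distrib,
          Finset.prod_pow_eq_pow_sum, hm.2]
    _ ≤ ∏ j, volume (dyadicCantorSet (s j) k ∩ Icc (c j) (c j + 2 ^ t j)) :=
        Finset.prod_le_prod' fun j _ => (hc j).2

lemma dyadicCantorRegion_subset_maxOp {B : Set (BoxInterval n)} (hB : IsRareBasis B)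
    {m : Fin n → ℕ} (hm : m ∈ OmegaNK n k) {R : BoxInterval n} (hR : R ∈ B)
    (hdyadic : ∀ j, ∃ t : ℤ, R.side j = 2 ^ t)
    (hside : ∀ j, R.side j ∈ Ioc ((2 : ℝ) ^ s j (m j - 1)) (2 ^ s j (m j))) :
    dyadicCantorRegion s k m ⊆
      {x | 1 / 2 ^ k ≤ maxOp B ((dyadicCantorProduct s k).indicator fun _ => (1 : ℝ)) x} := by
  choose t ht using hdyadic
  intro x hx
  obtain ⟨R', hR', hxR', hvol⟩ := exists_mem_basis_le_volume_dyadicCantorProduct_inter hs hB hm hR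
    ht (fun j => (zpow_lt_zpow_iff_right₀ one_lt_two).1 (ht j ▸ (hside j).1))
    (fun j => (zpow_le_zpow_iff_right₀ one_lt_two).1 (ht j ▸ (hside j).2)) hx
  refine le_trans ?_ (le_maxOp_indicator hR' hxR' (measurableSet_dyadicCantorProduct s))
  rwa [one_div, ENNReal.inv_pow, ENNReal.le_div_iff_mul_le (Or.inl R'.volume_toSet_ne_zero)
    (Or.inl R'.volume_toSet_ne_top)]

end DyadicCantorProduct

theorem statement5_general (n : ℕ) :
    ∃ c : ℝ, 0 < c ∧
      ∀ k : ℕ, n ≤ k → ∀ s : Fin n → ℕ → ℤ,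
        (∀ j, ∀ m, m < k → s j m < s j (m + 1)) →
        ∃ E : Set (Fin n → ℝ), Bornology.IsBounded E ∧ MeasurableSet E ∧ 0 < volume E ∧
          ∀ B : Set (BoxInterval n), IsRareBasis B →
            ENNReal.ofReal c *
                ({m ∈ OmegaNK n k | ∃ R ∈ B, (∀ j, ∃ t : ℤ, R.side j = (2:ℝ) ^ t) ∧
                    ∀ j, R.side j ∈ Set.Ioc ((2:ℝ) ^ s j (m j - 1))
                      ((2:ℝ) ^ s j (m j))}.ncard : ℝ≥0∞) *
                (2 ^ k * volume E) ≤
              volume {x | (1:ℝ≥0∞) / 2 ^ k ≤ maxOp B (E.indicator fun _ => (1:ℝ)) x} := by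
  refine ⟨2⁻¹ ^ n, by positivity, fun k _ s hs => ?_⟩
  have hmono : ∀ j, StrictMonoOn (s j) (Iic k) := fun j =>
    strictMonoOn_Iic_of_lt_succ fun m hm => hs j m hm
  refine ⟨dyadicCantorProduct s k, isBounded_dyadicCantorProduct s,
    measurableSet_dyadicCantorProduct s, volume_dyadicCantorProduct_pos hmono, fun B hB => ?_⟩
  set Ω := {m ∈ OmegaNK n k | ∃ R ∈ B, (∀ j, ∃ t : ℤ, R.side j = (2:ℝ) ^ t) ∧
    ∀ j, R.side j ∈ Set.Ioc ((2:ℝ) ^ s j (m j - 1)) ((2:ℝ) ^ s j (m j))}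
  have hΩ : Ω.Finite := (OmegaNK.finite n k).subset (sep_subset _ _)
  have hΩ_sub : (hΩ.toFinset : Set (Fin n → ℕ)) ⊆ OmegaNK n k := fun m hm =>
    (hΩ.mem_toFinset.1 hm).1
  calc ENNReal.ofReal (2⁻¹ ^ n) * (Ω.ncard : ℝ≥0∞) * (2 ^ k * volume (dyadicCantorProduct s k))
      = ∑ m ∈ hΩ.toFinset, volume (dyadicCantorRegion s k m) := by
        rw [Finset.sum_congr rfl fun m hm => volume_dyadicCantorRegion hmono (hΩ_sub hm),
          Finset.sum_const, nsmul_eq_mul, Set.ncard_eq_toFinset_card Ω hΩ,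
          ENNReal.ofReal_pow (by norm_num), ENNReal.ofReal_inv_of_pos two_pos, ENNReal.ofReal_ofNat]
        ring
    _ = volume (⋃ m ∈ hΩ.toFinset, dyadicCantorRegion s k m) :=
        (measure_biUnion_finset ((pairwiseDisjoint_dyadicCantorRegion hmono).subset hΩ_sub)
          fun m _ => measurableSet_dyadicCantorRegion s m).symm
    _ ≤ _ := measure_mono <| iUnion₂_subset fun m hm => by
        obtain ⟨hmΩ, R, hR, hdyadic, hside⟩ := hΩ.mem_toFinset.1 hm
        exact dyadicCantorRegion_subset_maxOp hmono hB hmΩ hR hdyadic hside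

/-- Lemma 3: for every `k ≥ n` and increasing integer sequences `(s_{j,m})_{m=0}^k` there is
a bounded set `E` of positive measure such that for any rare basis `B`, with `Ω` the set of
tuples of `Ω_{n,k}` realized by boxes of `B` with dyadic side lengths in the prescribed
ranges, `|{M_B χ_E ≥ 2^{-k}}| ≥ cₙ card(Ω) 2^k |E|`. -/
theorem statement5 (n : ℕ) (hn : 1 ≤ n) :
    ∃ c : ℝ, 0 < c ∧
      ∀ k : ℕ, n ≤ k → ∀ s : Fin n → ℕ → ℤ,
        (∀ j, ∀ m, m < k → s j m < s j (m + 1)) →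
        ∃ E : Set (Fin n → ℝ), Bornology.IsBounded E ∧ MeasurableSet E ∧ 0 < volume E ∧
          ∀ B : Set (BoxInterval n), IsRareBasis B →
            ENNReal.ofReal c *
                ({m ∈ OmegaNK n k | ∃ R ∈ B, (∀ j, ∃ t : ℤ, R.side j = (2:ℝ) ^ t) ∧
                    ∀ j, R.side j ∈ Set.Ioc ((2:ℝ) ^ s j (m j - 1))
                      ((2:ℝ) ^ s j (m j))}.ncard : ℝ≥0∞) *
                (2 ^ k * volume E) ≤
              volume {x | (1:ℝ≥0∞) / 2 ^ k ≤ maxOp B (E.indicator fun _ => (1:ℝ)) x} :=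
  statement5_general n

end
end

section
/- If the spectrum of a rare basis B in ℝⁿ is dense in S₁×⋯×Sₙ for some infinite sets S₁,…,Sₙ ⊂ ℤ, then B is Ω_{n,k}-complete for every k ≥ n. -/
open MeasureTheory Set
open scoped ENNReal

noncomputable section

/-!
For each coordinate `j` one places `k` points of the infinite set `Sⱼ` so far apart that windows
of radius `N` around them are disjoint, and cuts `ℤ` between consecutive windows; the cut points
are the thresholds `s_{j,0} < ⋯ < s_{j,k}`. Working coordinate by coordinate, every admissible
prefix `w ∈ π_j(W_B)` extends, by density, to `(w, ω) ∈ π_{j+1}(W_B)` with `ω` within `N` of any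
prescribed point of `S_{j+1}`, where `N` bounds the finitely many net constants used so far. Hence
every pattern of threshold windows is hit by the spectrum, and the dyadic hull of a box with
spectrum `w` has sides exactly `2^{w_j}`.
-/

lemma exists_gapSeq_of_forall_exists_gt {S : Set ℤ} (hS : ∀ x, ∃ y ∈ S, x < y) (d : ℤ) :
    ∃ τ : ℕ → ℤ, (∀ r, τ r ∈ S) ∧ ∀ r, τ r + d < τ (r + 1) := by
  choose g hgS hgt using hS
  exact ⟨fun r => Nat.rec (g 0) (fun _ p => g (p + d)) r, fun r => by cases r <;> exact hgS _,
    fun r => hgt _⟩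

lemma Set.Infinite.exists_gapSeq {S : Set ℤ} (hS : S.Infinite) (d : ℤ) (k : ℕ) :
    ∃ τ : ℕ → ℤ, (∀ r < k, τ r ∈ S) ∧ ∀ r, r + 1 < k → τ r + d < τ (r + 1) := by
  by_cases hup : BddAbove S
  · have hdown : ∀ x, ∃ y ∈ {y : ℤ | -y ∈ S}, x < y := by
      have hbelow : ¬BddBelow S := fun hbelow => hS (hbelow.finite_of_bddAbove hup)
      intro x
      obtain ⟨y, hy, hyx⟩ := not_bddBelow_iff.mp hbelow (-x)
      exact ⟨-y, by simpa using hy, by omega⟩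
    obtain ⟨σ, hσS, hσgap⟩ := exists_gapSeq_of_forall_exists_gt hdown d
    refine ⟨fun r => -σ (k - 1 - r), fun r _ => hσS _, fun r hr => ?_⟩
    have := hσgap (k - 1 - (r + 1))
    show -σ (k - 1 - r) + d < -σ (k - 1 - (r + 1))
    rw [show k - 1 - r = k - 1 - (r + 1) + 1 by omega]
    omega
  · obtain ⟨τ, hτS, hτgap⟩ := exists_gapSeq_of_forall_exists_gt (not_bddAbove_iff.mp hup) d
    exact ⟨τ, fun r _ => hτS r, fun r _ => hτgap r⟩

/-- Cut points between the windows `[τ r - N, τ r + N]`. -/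
def gapThresholds (τ : ℕ → ℤ) (N : ℤ) : ℕ → ℤ
  | 0 => τ 0 - N - 1
  | m + 1 => τ m + N

lemma Set.Infinite.exists_thresholds {S : Set ℤ} (hS : S.Infinite) (N k : ℕ) :
    ∃ t : ℕ → ℤ, (∀ m < k, t m < t (m + 1)) ∧
      ∀ r < k, ∃ τ ∈ S, ∀ ω : ℤ, |τ - ω| ≤ N → ω ∈ Ioc (t r) (t (r + 1)) := by
  obtain ⟨τ, hτS, hτgap⟩ := hS.exists_gapSeq (2 * N) k
  refine ⟨gapThresholds τ N, fun m hm => ?_, fun r hr => ⟨τ r, hτS r hr, fun ω hω => ?_⟩⟩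
  · cases m with
    | zero => simp only [gapThresholds]; omega
    | succ m => have := hτgap m hm; simp only [gapThresholds]; omega
  · rw [abs_le] at hω
    cases r with
    | zero => simp only [gapThresholds, mem_Ioc]; omega
    | succ r => have := hτgap r hr; simp only [gapThresholds, mem_Ioc]; omega

def RealizesPatterns {j : ℕ} (W : Set (Fin j → ℤ)) (k : ℕ) (s : Fin j → ℕ → ℤ) : Prop :=
  ∀ f : Fin j → Fin k, ∃ w ∈ W, ∀ i, w i ∈ Ioc (s i (f i)) (s i (f i + 1))

lemma RealizesPatterns.exists_snoc {j k : ℕ} {W : Set (Fin j → ℤ)} {V : Set (Fin (j + 1) → ℤ)}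
    {S : Set ℤ} {s : Fin j → ℕ → ℤ} (hs : RealizesPatterns W k s) (hS : S.Infinite)
    (hV : IsNetMulti V {v | Fin.init v ∈ W ∧ v (Fin.last j) ∈ S}) :
    ∃ t : ℕ → ℤ, (∀ m < k, t m < t (m + 1)) ∧
      RealizesPatterns V k (Fin.snoc (α := fun _ => ℕ → ℤ) s t) := by
  choose w hwW hws using hs
  choose N hN using fun f => hV (w f)
  obtain ⟨t, ht, hτ⟩ := hS.exists_thresholds (Finset.univ.sup N) k
  refine ⟨t, ht, fun f => ?_⟩
  obtain ⟨τ, hτS, hτt⟩ := hτ _ (f (Fin.last j)).isLt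
  have hsnoc : Fin.snoc (α := fun _ => ℤ) (w (Fin.init f)) τ ∈
      {v : Fin (j + 1) → ℤ | Fin.init v ∈ W ∧ v (Fin.last j) ∈ S} :=
    ⟨by simpa only [Fin.init_snoc] using hwW _, by simpa only [Fin.snoc_last] using hτS⟩
  obtain ⟨ω, hωV, hτω⟩ := hN (Fin.init f) τ hsnoc
  have hNsup : (N (Fin.init f) : ℤ) ≤ Finset.univ.sup N := by
    exact_mod_cast Finset.le_sup (Finset.mem_univ _)
  refine ⟨Fin.snoc (w (Fin.init f)) ω, hωV, Fin.lastCases ?_ fun i => ?_⟩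
  · simpa only [Fin.snoc_last] using hτt ω (hτω.trans hNsup)
  · simpa only [Fin.snoc_castSucc, Fin.init] using hws (Fin.init f) i

lemma IsDenseIn.exists_realizesPatterns_projZ {n : ℕ} {W : Set (Fin n → ℤ)} {S : Fin n → Set ℤ}
    (hdense : IsDenseIn W S) (hS : ∀ j, (S j).Infinite) (hW : W.Nonempty) (k : ℕ) :
    ∀ j (hj : j ≤ n), ∃ s : Fin j → ℕ → ℤ,
      (∀ i, ∀ m < k, s i m < s i (m + 1)) ∧ RealizesPatterns (projZ j hj W) k s := by
  intro j
  induction j with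
  | zero =>
    intro _
    obtain ⟨w, hw⟩ := hW
    exact ⟨Fin.elim0, fun i => i.elim0, fun _ => ⟨_, mem_image_of_mem _ hw, fun i => i.elim0⟩⟩
  | succ j ih =>
    intro hj
    obtain ⟨s, hs, hsW⟩ := ih (Nat.le_of_succ_le hj)
    obtain ⟨t, ht, hV⟩ := hsW.exists_snoc (hS ⟨j, hj⟩) (hdense ⟨j, hj⟩)
    exact ⟨_, Fin.lastCases (by simpa only [Fin.snoc_last] using ht)
      (fun i => by simpa only [Fin.snoc_castSucc] using hs i), hV⟩

lemma projZ_self {n : ℕ} (W : Set (Fin n → ℤ)) : projZ n le_rfl W = W :=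
  image_id W

lemma dyadicHull_side {n : ℕ} (R : BoxInterval n) (j : Fin n) :
    (dyadicHull R).side j = (2 : ℝ) ^ ⌈Real.logb 2 (R.side j)⌉ := by
  simp only [dyadicHull, BoxInterval.side]
  ring

lemma omegaComplete_of_realizesPatterns {n k : ℕ} {B : Set (BoxInterval n)} {s : Fin n → ℕ → ℤ}
    (hs : ∀ i, ∀ m < k, s i m < s i (m + 1)) (hB : RealizesPatterns (spectrumB B) k s) :
    OmegaComplete B k (OmegaNK n k) := by
  refine ⟨s, hs, fun m ⟨hm1, hmk⟩ => ?_⟩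
  have hm_le : ∀ j, m j ≤ k := fun j =>
    hmk ▸ Finset.single_le_sum (fun i _ => Nat.zero_le (m i)) (Finset.mem_univ j)
  obtain ⟨w, ⟨R, hRB, hRw⟩, hw⟩ := hB fun j => ⟨m j - 1, by have := hm1 j; have := hm_le j; omega⟩
  refine ⟨dyadicHull R, ⟨R, hRB, rfl⟩, fun j => ?_⟩
  obtain ⟨hlo, hhi⟩ := hw j
  rw [Nat.sub_add_cancel (hm1 j)] at hhi
  rw [dyadicHull_side, ← hRw j]
  exact ⟨zpow_lt_zpow_right₀ one_lt_two hlo, zpow_le_zpow_right₀ one_le_two hhi⟩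

theorem statement7_general (n : ℕ) (B : Set (BoxInterval n)) (hB : IsRareBasis B)
    (S : Fin n → Set ℤ) (hS : ∀ j, (S j).Infinite)
    (hdense : IsDenseIn (spectrumB B) S) :
    ∀ k : ℕ, n ≤ k → OmegaComplete B k (OmegaNK n k) := by
  intro k _
  have hW : (spectrumB B).Nonempty := by
    obtain ⟨R, hR⟩ := hB.1
    exact ⟨_, R, hR, fun _ => rfl⟩
  obtain ⟨s, hs, hsW⟩ := hdense.exists_realizesPatterns_projZ hS hW k n le_rfl
  exact omegaComplete_of_realizesPatterns hs (projZ_self (spectrumB B) ▸ hsW)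

/-- If the spectrum of a rare basis `B` in `ℝⁿ` is dense in `S₁ × ⋯ × Sₙ` for some infinite
sets `Sⱼ ⊂ ℤ`, then `B` is `Ω_{n,k}`-complete for every `k ≥ n`. -/
theorem statement7 (n : ℕ) (hn : 1 ≤ n) (B : Set (BoxInterval n)) (hB : IsRareBasis B)
    (S : Fin n → Set ℤ) (hS : ∀ j, (S j).Infinite)
    (hdense : IsDenseIn (spectrumB B) S) :
    ∀ k : ℕ, n ≤ k → OmegaComplete B k (OmegaNK n k) :=
  statement7_general n B hB S hS hdense

end
end

section
/- Let B₁ be a rare basis of two-dimensional intervals satisfying the (is)-property and let B₂ be a translation-invariant collection of one-dimensional intervals whose lengths form an infinite set of dyadic numbers. Then the product basis B₁×B₂ = {J₁×J₂ : J₁ ∈ B₁, J₂ ∈ B₂} in ℝ³ is Ω_{3,k}-complete for every k ≥ 3. -/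
open MeasureTheory Set
open scoped ENNReal

noncomputable section

/-! The (is)-property provides `k + 1` pairwise incomparable boxes `[0, 2^{pᵢ}] × [0, 2^{qᵢ}]`
in `B₁`; incomparability makes the exponent pairs an antichain, so after sorting `p` increases,
`q` decreases, and `Rᵢ ∩ Rⱼ ∈ B₁` has sides `2^{pᵢ}, 2^{qⱼ}` for `i ≤ j`. Choosing `k + 1`
increasing exponents `r` of lengths in `B₂`, the box `(R_{m₁} ∩ R_{k - m₂}) × I` with
`|I| = 2^{r_{m₃}}` realises `(m₁, m₂, m₃) ∈ Ω_{3,k}` for the scales `p`, `q` read backwards,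
and `r`. -/

namespace BoxInterval

theorem toSet_eq_Icc {n : ℕ} (R : BoxInterval n) : R.toSet = Icc R.a R.b :=
  Set.pi_univ_Icc R.a R.b

theorem eq_of_toSet_eq_Icc {n : ℕ} {R : BoxInterval n} {a b : Fin n → ℝ}
    (h : R.toSet = Icc a b) : R.a = a ∧ R.b = b :=
  (Icc_eq_Icc_iff fun j => (R.hab j).le).1 (R.toSet_eq_Icc ▸ h)

@[simp]
theorem translate_zero {n : ℕ} (R : BoxInterval n) : R.translate 0 = R := by
  cases R
  simp [translate]

end BoxInterval

theorem ceil_logb_two_zpow (t : ℤ) : ⌈Real.logb 2 ((2:ℝ) ^ t)⌉ = t := by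
  rw [← Real.rpow_intCast, Real.logb_rpow two_pos (by norm_num), Int.ceil_intCast]

theorem dyadicHull_side_of_side_eq_zpow {n : ℕ} {R : BoxInterval n} {j : Fin n} {t : ℤ}
    (h : R.side j = (2:ℝ) ^ t) : (dyadicHull R).side j = (2:ℝ) ^ t := by
  simp only [dyadicHull, BoxInterval.side] at h ⊢
  rw [h, ceil_logb_two_zpow]
  ring

theorem prodBox_side_castSucc {n : ℕ} (J1 : BoxInterval n) (J2 : BoxInterval 1) (i : Fin n) :
    (prodBox J1 J2).side i.castSucc = J1.side i := by
  simp [prodBox, BoxInterval.side]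

theorem prodBox_side_last {n : ℕ} (J1 : BoxInterval n) (J2 : BoxInterval 1) :
    (prodBox J1 J2).side (Fin.last n) = J2.side 0 := by
  simp [prodBox, BoxInterval.side]

theorem OmegaNK.one_le_and_le {n k : ℕ} {m : Fin n → ℕ} (hm : m ∈ OmegaNK n k) (j : Fin n) :
    1 ≤ m j ∧ m j ≤ k :=
  ⟨hm.1 j, hm.2 ▸ Finset.single_le_sum (fun i _ => Nat.zero_le (m i)) (Finset.mem_univ j)⟩

/-- Boxes with dyadic sides are their own dyadic hulls. -/
theorem omegaComplete_OmegaNK_of_side_eq_zpow {n k : ℕ} {B : Set (BoxInterval n)}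
    (s : Fin n → ℕ → ℤ) (hs : ∀ j, ∀ m < k, s j m < s j (m + 1))
    (h : ∀ m ∈ OmegaNK n k, ∃ R ∈ B, ∀ j, R.side j = (2:ℝ) ^ s j (m j)) :
    OmegaComplete B k (OmegaNK n k) := by
  refine ⟨s, hs, fun m hm => ?_⟩
  obtain ⟨R, hRB, hR⟩ := h m hm
  refine ⟨dyadicHull R, ⟨R, hRB, rfl⟩, fun j => ?_⟩
  obtain ⟨hm1, hmk⟩ := OmegaNK.one_le_and_le hm j
  have hlt : s j (m j - 1) < s j (m j) := by
    simpa [Nat.sub_add_cancel hm1] using hs j (m j - 1) (by omega)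
  rw [dyadicHull_side_of_side_eq_zpow (hR j)]
  exact ⟨zpow_lt_zpow_right₀ one_lt_two hlt, le_rfl⟩

/-- An antichain for the product order on `α × β`, sorted by the first coordinate,
is strictly decreasing in the second one. -/
theorem exists_perm_strictMono_strictAnti {α β : Type*} [LinearOrder α] [LinearOrder β]
    {n : ℕ} (f : Fin n → α) (g : Fin n → β) (h : ∀ i j, i ≠ j → f i ≤ f j → g j < g i) :
    ∃ σ : Equiv.Perm (Fin n), StrictMono (f ∘ σ) ∧ StrictAnti (g ∘ σ) := by
  have hf : f.Injective := fun i j hij => by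
    by_contra hne
    exact (h i j hne hij.le).not_gt (h j i (Ne.symm hne) hij.ge)
  have hmono : StrictMono (f ∘ Tuple.sort f) :=
    (Tuple.monotone_sort f).strictMono_of_injective (hf.comp (Tuple.sort f).injective)
  refine ⟨Tuple.sort f, hmono, fun i j hij => ?_⟩
  exact h _ _ ((Tuple.sort f).injective.ne hij.ne) (hmono hij).le

theorem Set.Infinite.exists_strictMono_fin {α : Type*} [LinearOrder α] {s : Set α}
    (hs : s.Infinite) (n : ℕ) : ∃ f : Fin n → α, StrictMono f ∧ ∀ i, f i ∈ s := by
  obtain ⟨T, hTs, hT⟩ := hs.exists_subset_card_eq n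
  exact ⟨T.orderEmbOfFin hT, (T.orderEmbOfFin hT).strictMono,
    fun i => hTs (T.orderEmbOfFin_mem hT i)⟩

theorem exists_strictMono_zpow_mem {L : Set ℝ} (hL : L.Infinite)
    (hdyadic : L ⊆ {x | ∃ s : ℤ, x = (2:ℝ) ^ s}) (n : ℕ) :
    ∃ r : Fin n → ℤ, StrictMono r ∧ ∀ i, (2:ℝ) ^ r i ∈ L := by
  have hE : {s : ℤ | (2:ℝ) ^ s ∈ L}.Infinite := fun hfin =>
    hL <| (hfin.image _).subset fun x hx => by
      obtain ⟨s, rfl⟩ := hdyadic hx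
      exact ⟨s, hx, rfl⟩
  exact hE.exists_strictMono_fin n

theorem ISProperty.exists_staircase {B : Set (BoxInterval 2)} (his : ISProperty B) (k : ℕ) :
    ∃ p q : Fin (k + 1) → ℤ, StrictMono p ∧ StrictAnti q ∧
      ∀ i j, i ≤ j → ∃ Q ∈ B, Q.side 0 = (2:ℝ) ^ p i ∧ Q.side 1 = (2:ℝ) ^ q j := by
  obtain ⟨R, -, hRa, hRb, hinc, hint⟩ := his k
  choose e he using hRb
  have hR : ∀ i, (R i).toSet = Icc 0 fun l => (2:ℝ) ^ e i l := fun i => by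
    rw [BoxInterval.toSet_eq_Icc, hRa i, funext (he i)]
    rfl
  have hanti : ∀ i j, i ≠ j → e i 0 ≤ e j 0 → e j 1 < e i 1 := by
    intro i j hij h0
    by_contra! h1
    refine hinc i j hij 0 ?_
    rw [BoxInterval.translate_zero, hR, hR]
    refine Icc_subset_Icc le_rfl fun l => zpow_le_zpow_right₀ one_le_two ?_
    fin_cases l
    exacts [h0, h1]
  obtain ⟨σ, hp, hq⟩ := exists_perm_strictMono_strictAnti _ _ hanti
  refine ⟨fun i => e (σ i) 0, fun i => e (σ i) 1, hp, hq, fun i j hij => ?_⟩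
  obtain ⟨Q, hQB, hQ⟩ := hint (σ i) (σ j)
  rw [hR, hR, Icc_inter_Icc, sup_idem] at hQ
  obtain ⟨hQa, hQb⟩ := BoxInterval.eq_of_toSet_eq_Icc hQ
  refine ⟨Q, hQB, ?_, ?_⟩
  · simp only [BoxInterval.side, hQa, hQb]
    simpa using hp.monotone hij
  · simp only [BoxInterval.side, hQa, hQb]
    simpa using hq.antitone hij

theorem statement16_general (B1 : Set (BoxInterval 2))
    (his : ISProperty B1)
    (B2 : Set (BoxInterval 1))
    (hB2inf : {l : ℝ | ∃ I ∈ B2, I.side 0 = l}.Infinite)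
    (hB2dyadic : {l : ℝ | ∃ I ∈ B2, I.side 0 = l} ⊆ {x | ∃ s : ℤ, x = (2:ℝ) ^ s}) :
    ∀ k : ℕ, 3 ≤ k → OmegaComplete (prodBasis B1 B2) k (OmegaNK 3 k) := by
  intro k _
  obtain ⟨p, q, hp, hq, hB1⟩ := his.exists_staircase k
  obtain ⟨r, hr, hB2⟩ := exists_strictMono_zpow_mem hB2inf hB2dyadic (k + 1)
  refine omegaComplete_OmegaNK_of_side_eq_zpow
    ![fun m => p (Fin.clamp m k), fun m => q (Fin.clamp (k - m) k), fun m => r (Fin.clamp m k)]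
    (fun j m hm => ?_) (fun m hm => ?_)
  · fin_cases j
    · exact hp (by simp [Fin.lt_def]; omega)
    · exact hq (by simp [Fin.lt_def]; omega)
    · exact hr (by simp [Fin.lt_def]; omega)
  · have hsum : m 0 + m 1 + m 2 = k := by simpa [Fin.sum_univ_three] using hm.2
    obtain ⟨Q, hQB, hQ0, hQ1⟩ := hB1 (Fin.clamp (m 0) k) (Fin.clamp (k - m 1) k)
      (by simp [Fin.le_def]; omega)
    obtain ⟨I, hIB, hI⟩ := hB2 (Fin.clamp (m 2) k)
    refine ⟨prodBox Q I, ⟨Q, hQB, I, hIB, rfl⟩, fun j => ?_⟩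
    fin_cases j
    · exact (prodBox_side_castSucc Q I 0).trans hQ0
    · exact (prodBox_side_castSucc Q I 1).trans hQ1
    · exact (prodBox_side_last Q I).trans hI

/-- Application VII (completeness part): if `B₁` is a rare basis in `ℝ²` with the
(is)-property and `B₂` is a translation-invariant family of one-dimensional intervals whose
lengths form an infinite set of dyadic numbers, then `B₁ × B₂` is `Ω_{3,k}`-complete for
every `k ≥ 3`. -/
theorem statement16 (B1 : Set (BoxInterval 2)) (hB1 : IsRareBasis B1)
    (his : ISProperty B1)
    (B2 : Set (BoxInterval 1))
    (hB2trans : ∀ I ∈ B2, ∀ v : Fin 1 → ℝ, I.translate v ∈ B2)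
    (hB2inf : {l : ℝ | ∃ I ∈ B2, I.side 0 = l}.Infinite)
    (hB2dyadic : {l : ℝ | ∃ I ∈ B2, I.side 0 = l} ⊆ {x | ∃ s : ℤ, x = (2:ℝ) ^ s}) :
    ∀ k : ℕ, 3 ≤ k → OmegaComplete (prodBasis B1 B2) k (OmegaNK 3 k) :=
  statement16_general B1 his B2 hB2inf hB2dyadic
end
end
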